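/- Let d ≥ 1, μ ∈ (0, 1), λ > 0, c ∈ ℝ, C₁ ≥ 0, let P be a d×d real matrix with P² = P, let a : (0, ∞) → [0, ∞), and let Φ : {(t, s) : 0 ≤ s ≤ t} → (d×d real matrices) satisfy, for each t, that s ↦ Φ(t, s) is measurable and ‖Φ(t, s) − P‖ ≤ C₁·e^{−λ(t−s)} + a(t) for all 0 ≤ s ≤ t. Let 0 = T₀ < T₁ < ⋯ < T_K, let σ : [0, ∞) → ℝ^d be piecewise constant, equal to σ_k on (T_{k−1}, T_k) for k = 1, …, K and equal to a fixed vector σ̄ = σ_{K+1} on (T_K, ∞), with ‖σ_k‖₂ ≤ √d for all k. Define, for t > T_K, δ(t) = c·μ·∫_0^t s^{μ−1}·Φ(t, s)·σ(s) ds + c·∑_{k=1}^K Φ(t, T_k)·(σ_{k+1} − σ_k)·T_k^μ. Then there exists C > 0 such that for all t ≥ max(T_K, 1) + 1: ‖δ(t) − c·t^μ·P·σ̄‖₂ ≤ C·(t^{μ−1} + t^μ·a(t) + e^{−λ(t−T_K)}). -/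

import Mathlib

/-
The projection part of the drift telescopes exactly: on each interval `(T_{k-1}, T_k)` the sign
vector is constant and `μ ∫ s^{μ-1} ds = T_k^μ - T_{k-1}^μ`, so by Abel summation the integral
of `P σ` and the jump terms `T_k^μ P (σ_{k+1} - σ_k)` add up to `t^μ P σ̄`.  What remains involves
only `Φ - P`, and is bounded by `√d ∫₀ᵗ μ s^{μ-1} (C₁ e^{-λ(t-s)} + a(t)) ds` plus the jump terms
`T_k^μ (C₁ e^{-λ(t-T_k)} + a(t)) 2√d`.  Splitting the integral at `t/2` shows
`∫₀ᵗ s^{μ-1} e^{-λ(t-s)} ds = O(t^{μ-1})`.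
-/

open MeasureTheory Real Set

lemma integral_rpow_sub_one (mu : ℝ) (hmu : 0 < mu) (x y : ℝ) :
    ∫ s in x..y, s ^ (mu - 1) = (y ^ mu - x ^ mu) / mu := by
  rw [integral_rpow (Or.inl (by linarith)), sub_add_cancel]

lemma mul_exp_neg_mul_le_inv {lam : ℝ} (hlam : 0 < lam) (x : ℝ) :
    x * exp (-(lam * x)) ≤ lam⁻¹ := by
  rw [exp_neg, ← div_eq_mul_inv, div_le_iff₀ (exp_pos _), inv_mul_eq_div, le_div_iff₀ hlam]
  linarith [add_one_le_exp (lam * x)]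

lemma integral_exp_neg_mul_sub_le {lam : ℝ} (hlam : 0 < lam) {a b t : ℝ} (hbt : b ≤ t) :
    ∫ s in a..b, exp (-(lam * (t - s))) ≤ lam⁻¹ := by
  have hlin : ∀ s, -(lam * (t - s)) = lam * s + -(lam * t) := fun s => by ring
  simp only [hlin, intervalIntegral.integral_comp_mul_add exp hlam.ne', integral_exp, smul_eq_mul]
  have hb : exp (lam * b + -(lam * t)) ≤ 1 := exp_le_one_iff.mpr (by nlinarith)
  have ha := exp_pos (lam * a + -(lam * t))
  have := inv_pos.mpr hlam
  nlinarith

lemma half_rpow_le {t : ℝ} (ht : 0 ≤ t) {r : ℝ} (hr : -1 ≤ r) :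
    (t / 2) ^ r ≤ 2 * t ^ r := by
  rw [div_eq_mul_inv, mul_rpow ht (by norm_num), inv_rpow zero_le_two, ← rpow_neg zero_le_two,
    mul_comm 2]
  refine mul_le_mul_of_nonneg_left ?_ (rpow_nonneg ht r)
  calc (2 : ℝ) ^ (-r) ≤ 2 ^ (1 : ℝ) := rpow_le_rpow_of_exponent_le one_le_two (by linarith)
    _ = 2 := rpow_one 2

lemma integral_rpow_mul_exp_neg_le {mu lam t : ℝ} (hmu0 : 0 < mu) (hmu1 : mu ≤ 1)
    (hlam : 0 < lam) (ht : 0 < t) :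
    ∫ s in 0..t, s ^ (mu - 1) * exp (-(lam * (t - s)))
      ≤ 2 * ((mu⁻¹ + 1) * lam⁻¹) * t ^ (mu - 1) := by
  have hrpow : ∀ x y : ℝ, IntervalIntegrable (fun s : ℝ => s ^ (mu - 1)) volume x y :=
    fun _ _ => intervalIntegral.intervalIntegrable_rpow' (by linarith)
  have hint : ∀ x y : ℝ,
      IntervalIntegrable (fun s => s ^ (mu - 1) * exp (-(lam * (t - s)))) volume x y :=
    fun x y => (hrpow x y).mul_continuousOn (by fun_prop)
  have ht2 : 0 < t / 2 := half_pos ht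
  have hlow : ∫ s in 0..t / 2, s ^ (mu - 1) * exp (-(lam * (t - s)))
      ≤ (t / 2) ^ (mu - 1) * (mu⁻¹ * lam⁻¹) :=
    calc ∫ s in 0..t / 2, s ^ (mu - 1) * exp (-(lam * (t - s)))
        ≤ ∫ s in 0..t / 2, s ^ (mu - 1) * exp (-(lam * (t / 2))) := by
          refine intervalIntegral.integral_mono_on ht2.le (hint _ _) ((hrpow _ _).mul_const _)
            fun s hs => mul_le_mul_of_nonneg_left ?_ (rpow_nonneg hs.1 _)
          exact exp_le_exp.mpr (by nlinarith [hs.2])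
      _ = (t / 2) ^ (mu - 1) * (t / 2 * exp (-(lam * (t / 2)))) * mu⁻¹ := by
          rw [intervalIntegral.integral_mul_const, integral_rpow_sub_one mu hmu0,
            zero_rpow hmu0.ne', sub_zero, rpow_sub_one ht2.ne']
          field_simp
      _ ≤ (t / 2) ^ (mu - 1) * lam⁻¹ * mu⁻¹ := by
          gcongr
          exact mul_exp_neg_mul_le_inv hlam _
      _ = (t / 2) ^ (mu - 1) * (mu⁻¹ * lam⁻¹) := by ring
  have hhigh : ∫ s in t / 2..t, s ^ (mu - 1) * exp (-(lam * (t - s)))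
      ≤ (t / 2) ^ (mu - 1) * lam⁻¹ :=
    calc ∫ s in t / 2..t, s ^ (mu - 1) * exp (-(lam * (t - s)))
        ≤ ∫ s in t / 2..t, (t / 2) ^ (mu - 1) * exp (-(lam * (t - s))) := by
          refine intervalIntegral.integral_mono_on (by linarith) (hint _ _)
            (Continuous.intervalIntegrable (by fun_prop) _ _)
            fun s hs => mul_le_mul_of_nonneg_right ?_ (exp_pos _).le
          exact rpow_le_rpow_of_nonpos ht2 hs.1 (by linarith)
      _ ≤ (t / 2) ^ (mu - 1) * lam⁻¹ := by
          rw [intervalIntegral.integral_const_mul]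
          exact mul_le_mul_of_nonneg_left (integral_exp_neg_mul_sub_le hlam le_rfl)
            (rpow_nonneg ht2.le _)
  rw [← intervalIntegral.integral_add_adjacent_intervals (hint 0 (t / 2)) (hint (t / 2) t)]
  calc _ ≤ (t / 2) ^ (mu - 1) * ((mu⁻¹ + 1) * lam⁻¹) := by linarith
    _ ≤ 2 * t ^ (mu - 1) * ((mu⁻¹ + 1) * lam⁻¹) := by
        gcongr
        exact half_rpow_le ht.le (by linarith)
    _ = _ := by ring

lemma mul_integral_rpow_mul_exp_add_le {mu lam C1 t a : ℝ} (hmu0 : 0 < mu) (hmu1 : mu ≤ 1)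
    (hlam : 0 < lam) (hC1 : 0 ≤ C1) (ht : 0 < t) :
    mu * ∫ s in 0..t, s ^ (mu - 1) * (C1 * exp (-(lam * (t - s))) + a)
      ≤ 2 * C1 * (1 + mu) * lam⁻¹ * t ^ (mu - 1) + t ^ mu * a := by
  have hrpow : IntervalIntegrable (fun s : ℝ => s ^ (mu - 1)) volume 0 t :=
    intervalIntegral.intervalIntegrable_rpow' (by linarith)
  have hsplit : ∫ s in 0..t, s ^ (mu - 1) * (C1 * exp (-(lam * (t - s))) + a)
      = C1 * (∫ s in 0..t, s ^ (mu - 1) * exp (-(lam * (t - s)))) + t ^ mu / mu * a := by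
    simp only [mul_add, mul_left_comm _ C1]
    rw [intervalIntegral.integral_add ((hrpow.mul_continuousOn (by fun_prop)).const_mul C1)
        (hrpow.mul_const a), intervalIntegral.integral_const_mul,
      intervalIntegral.integral_mul_const, integral_rpow_sub_one mu hmu0, zero_rpow hmu0.ne',
      sub_zero]
  calc mu * ∫ s in 0..t, s ^ (mu - 1) * (C1 * exp (-(lam * (t - s))) + a)
      ≤ mu * (C1 * (2 * ((mu⁻¹ + 1) * lam⁻¹) * t ^ (mu - 1)) + t ^ mu / mu * a) := by
        rw [hsplit]
        gcongr
        exact integral_rpow_mul_exp_neg_le hmu0 hmu1 hlam ht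
    _ = 2 * C1 * (1 + mu) * lam⁻¹ * t ^ (mu - 1) + t ^ mu * a := by field_simp

lemma mul_add_mul_add_mul_le (α β γ : ℝ) {x y z : ℝ} (hx : 0 ≤ x) (hy : 0 ≤ y) (hz : 0 ≤ z) :
    α * x + β * y + γ * z ≤ (|α| + |β| + |γ| + 1) * (x + y + z) := by
  have hα := mul_le_mul_of_nonneg_right (le_abs_self α) hx
  have hβ := mul_le_mul_of_nonneg_right (le_abs_self β) hy
  have hγ := mul_le_mul_of_nonneg_right (le_abs_self γ) hz
  nlinarith [abs_nonneg α, abs_nonneg β, abs_nonneg γ, mul_nonneg (abs_nonneg α) hy,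
    mul_nonneg (abs_nonneg α) hz, mul_nonneg (abs_nonneg β) hx, mul_nonneg (abs_nonneg β) hz,
    mul_nonneg (abs_nonneg γ) hx, mul_nonneg (abs_nonneg γ) hy]

lemma sum_range_sub_smul_add_sum_Icc_smul_sub {R M : Type*} [Ring R] [AddCommGroup M] [Module R M]
    (b : ℕ → R) (v : ℕ → M) (hb0 : b 0 = 0) (K : ℕ) :
    ∑ i ∈ Finset.range (K + 1), (b (i + 1) - b i) • v (i + 1)
      + ∑ k ∈ Finset.Icc 1 K, b k • (v (k + 1) - v k) = b (K + 1) • v (K + 1) := by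
  induction K with
  | zero => simp [hb0]
  | succ K ih =>
    rw [Finset.sum_range_succ, Finset.sum_Icc_succ_top (by omega), add_add_add_comm, ih,
      sub_smul, smul_sub]
    abel

def extendPartition (T : ℕ → ℝ) (K : ℕ) (t : ℝ) (i : ℕ) : ℝ := if i ≤ K then T i else t

section extendPartition

variable {T : ℕ → ℝ} {K : ℕ} {t : ℝ}

lemma extendPartition_of_le {i : ℕ} (hi : i ≤ K) : extendPartition T K t i = T i := if_pos hi

lemma extendPartition_succ : extendPartition T K t (K + 1) = t := if_neg (by omega)

lemma monotone_extendPartition (hT : ∀ k < K, T k ≤ T (k + 1)) (hTt : T K ≤ t) :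
    Monotone (extendPartition T K t) := by
  refine monotone_nat_of_le_succ fun i => ?_
  rcases lt_trichotomy i K with hi | rfl | hi
  · rw [extendPartition_of_le hi.le, extendPartition_of_le hi]
    exact hT i hi
  · rwa [extendPartition_of_le le_rfl, extendPartition_succ]
  · simp only [extendPartition, if_neg (by omega : ¬i ≤ K), if_neg (by omega : ¬i + 1 ≤ K),
      le_refl]

lemma eq_of_mem_Ioo_extendPartition {α : Type*} {σ : ℝ → α} {σv : ℕ → α}
    (hσ : ∀ k, 1 ≤ k → k ≤ K → ∀ s ∈ Ioo (T (k - 1)) (T k), σ s = σv k)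
    (hσtail : ∀ s, T K < s → σ s = σv (K + 1)) :
    ∀ i < K + 1, ∀ s ∈ Ioo (extendPartition T K t i) (extendPartition T K t (i + 1)),
      σ s = σv (i + 1) := by
  intro i hi s hs
  rcases Nat.lt_succ_iff_lt_or_eq.mp hi with hi | rfl
  · rw [extendPartition_of_le hi.le, extendPartition_of_le hi] at hs
    exact hσ (i + 1) (by omega) hi s hs
  · rw [extendPartition_of_le le_rfl] at hs
    exact hσtail s hs.1

end extendPartition

lemma integral_eq_sum_of_eqOn_uIoo {α E : Type*} [NormedAddCommGroup E] [NormedSpace ℝ E]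
    (φ : ℝ → α → E) {f : ℝ → α} {u : ℕ → α} {A : ℕ → ℝ} {n : ℕ}
    (hf : ∀ i < n, ∀ s ∈ uIoo (A i) (A (i + 1)), f s = u (i + 1))
    (hint : ∀ i < n, IntervalIntegrable (fun s => φ s (u (i + 1))) volume (A i) (A (i + 1))) :
    ∫ s in A 0..A n, φ s (f s)
      = ∑ i ∈ Finset.range n, ∫ s in A i..A (i + 1), φ s (u (i + 1)) := by
  have heq : ∀ i < n,
      EqOn (fun s => φ s (u (i + 1))) (fun s => φ s (f s)) (uIoo (A i) (A (i + 1))) :=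
    fun i hi s hs => by simp only [hf i hi s hs]
  rw [← intervalIntegral.sum_integral_adjacent_intervals fun i hi =>
    (hint i hi).congr_uIoo (heq i hi)]
  exact Finset.sum_congr rfl fun i hi =>
    (intervalIntegral.integral_congr_uIoo (heq i (Finset.mem_range.mp hi))).symm

section WeightedIntegral

variable {E : Type*} [NormedAddCommGroup E] [NormedSpace ℝ E]
  {mu : ℝ} {F : ℝ → E →L[ℝ] E} {P : E →L[ℝ] E} {g : ℝ → ℝ} {x y : ℝ}

lemma intervalIntegrable_rpow_smul_apply (hmu : 0 < mu) (hF : AEStronglyMeasurable F)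
    (hx : 0 ≤ x) (hxy : x ≤ y) (hg : IntervalIntegrable (fun s => s ^ (mu - 1) * g s) volume x y)
    (hFg : ∀ s ∈ Ioc x y, ‖F s - P‖ ≤ g s) (v : E) :
    IntervalIntegrable (fun s => s ^ (mu - 1) • F s v) volume x y := by
  have hrpow : IntervalIntegrable (fun s : ℝ => s ^ (mu - 1)) volume x y :=
    intervalIntegral.intervalIntegrable_rpow' (by linarith)
  refine (((hrpow.mul_const ‖P‖).add hg).mul_const ‖v‖).mono_fun' (by fun_prop) ?_
  rw [uIoc_of_le hxy]
  refine ae_restrict_of_forall_mem measurableSet_Ioc fun s hs => ?_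
  have hs0 : 0 ≤ s ^ (mu - 1) := rpow_nonneg (hx.trans hs.1.le) _
  dsimp only
  rw [norm_smul, norm_of_nonneg hs0, ← mul_add, mul_assoc]
  gcongr
  exact (F s).le_of_opNorm_le ((norm_le_insert' _ _).trans (by gcongr; exact hFg s hs)) v

lemma norm_smul_integral_rpow_smul_apply_sub_le [CompleteSpace E] (hmu : 0 < mu)
    (hF : AEStronglyMeasurable F) (hx : 0 ≤ x) (hxy : x ≤ y)
    (hg : IntervalIntegrable (fun s => s ^ (mu - 1) * g s) volume x y)
    (hFg : ∀ s ∈ Ioc x y, ‖F s - P‖ ≤ g s) (v : E) :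
    ‖mu • (∫ s in x..y, s ^ (mu - 1) • F s v) - (y ^ mu - x ^ mu) • P v‖
      ≤ mu * (‖v‖ * ∫ s in x..y, s ^ (mu - 1) * g s) := by
  have hbound : ∀ s ∈ Ioc x y, ‖s ^ (mu - 1) • (F s - P) v‖ ≤ ‖v‖ * (s ^ (mu - 1) * g s) := by
    intro s hs
    have hs0 : 0 ≤ s ^ (mu - 1) := rpow_nonneg (hx.trans hs.1.le) _
    rw [norm_smul, norm_of_nonneg hs0, mul_left_comm, mul_comm ‖v‖]
    exact mul_le_mul_of_nonneg_left ((F s - P).le_of_opNorm_le (hFg s hs) v) hs0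
  have hsplit : (∫ s in x..y, s ^ (mu - 1) • F s v) - ((y ^ mu - x ^ mu) / mu) • P v
      = ∫ s in x..y, s ^ (mu - 1) • (F s - P) v := by
    rw [← integral_rpow_sub_one mu hmu, ← intervalIntegral.integral_smul_const,
      ← intervalIntegral.integral_sub (intervalIntegrable_rpow_smul_apply hmu hF hx hxy hg hFg v)
        ((intervalIntegral.intervalIntegrable_rpow' (by linarith)).smul_continuousOn
          continuousOn_const)]
    simp only [sub_apply, smul_sub]
  rw [← mul_div_cancel₀ (y ^ mu - x ^ mu) hmu.ne', mul_smul, ← smul_sub, hsplit, norm_smul,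
    norm_of_nonneg hmu.le, ← intervalIntegral.integral_const_mul]
  exact mul_le_mul_of_nonneg_left (intervalIntegral.norm_integral_le_of_norm_le hxy
    (Filter.Eventually.of_forall hbound) (hg.const_mul ‖v‖)) hmu.le

lemma norm_smul_integral_rpow_smul_apply_sub_sum_le [CompleteSpace E] (hmu : 0 < mu)
    (hF : AEStronglyMeasurable F) {A : ℕ → ℝ} (hA : Monotone A) (hA0 : 0 ≤ A 0) {n : ℕ}
    (hg : IntervalIntegrable (fun s => s ^ (mu - 1) * g s) volume (A 0) (A n))
    (hFg : ∀ s ∈ Ioc (A 0) (A n), ‖F s - P‖ ≤ g s) {f : ℝ → E} {u : ℕ → E} {M : ℝ}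
    (hf : ∀ i < n, ∀ s ∈ Ioo (A i) (A (i + 1)), f s = u (i + 1))
    (hu : ∀ i < n, ‖u (i + 1)‖ ≤ M) :
    ‖mu • (∫ s in A 0..A n, s ^ (mu - 1) • F s (f s))
        - ∑ i ∈ Finset.range n, (A (i + 1) ^ mu - A i ^ mu) • P (u (i + 1))‖
      ≤ mu * (M * ∫ s in A 0..A n, s ^ (mu - 1) * g s) := by
  have hsub : ∀ i < n, Ioc (A i) (A (i + 1)) ⊆ Ioc (A 0) (A n) := fun i hi =>
    Ioc_subset_Ioc (hA i.zero_le) (hA hi)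
  have hgi : ∀ i < n,
      IntervalIntegrable (fun s => s ^ (mu - 1) * g s) volume (A i) (A (i + 1)) := fun i hi =>
    hg.mono_set (by
      rw [uIcc_of_le (hA i.le_succ), uIcc_of_le (hA n.zero_le)]
      exact Icc_subset_Icc (hA i.zero_le) (hA hi))
  have hFgi : ∀ i < n, ∀ s ∈ Ioc (A i) (A (i + 1)), ‖F s - P‖ ≤ g s := fun i hi s hs =>
    hFg s (hsub i hi hs)
  have hpiece : ∀ i < n, ‖mu • (∫ s in A i..A (i + 1), s ^ (mu - 1) • F s (u (i + 1)))
        - (A (i + 1) ^ mu - A i ^ mu) • P (u (i + 1))‖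
      ≤ mu * (M * ∫ s in A i..A (i + 1), s ^ (mu - 1) * g s) := by
    intro i hi
    refine (norm_smul_integral_rpow_smul_apply_sub_le hmu hF (hA0.trans (hA i.zero_le))
      (hA i.le_succ) (hgi i hi) (hFgi i hi) _).trans ?_
    have hI : 0 ≤ ∫ s in A i..A (i + 1), s ^ (mu - 1) * g s := by
      rw [intervalIntegral.integral_of_le (hA i.le_succ)]
      exact setIntegral_nonneg measurableSet_Ioc fun s hs =>
        mul_nonneg (rpow_nonneg (hA0.trans ((hA i.zero_le).trans hs.1.le)) _)
          ((norm_nonneg _).trans (hFgi i hi s hs))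
    exact mul_le_mul_of_nonneg_left (mul_le_mul_of_nonneg_right (hu i hi) hI) hmu.le
  rw [integral_eq_sum_of_eqOn_uIoo (fun s v => s ^ (mu - 1) • F s v)
      (fun i hi s hs => hf i hi s (by rwa [uIoo_of_le (hA i.le_succ)] at hs))
      fun i hi => intervalIntegrable_rpow_smul_apply hmu hF (hA0.trans (hA i.zero_le))
        (hA i.le_succ) (hgi i hi) (hFgi i hi) _,
    Finset.smul_sum, ← Finset.sum_sub_distrib,
    ← intervalIntegral.sum_integral_adjacent_intervals hgi, Finset.mul_sum, Finset.mul_sum]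
  exact norm_sum_le_of_le _ fun i hi => hpiece i (Finset.mem_range.mp hi)

end WeightedIntegral

section Drift

variable {E : Type*} [NormedAddCommGroup E] [NormedSpace ℝ E]

lemma norm_sum_rpow_smul_sub_apply_le {mu lam C1 t a M : ℝ} (hmu : 0 ≤ mu) (hlam : 0 ≤ lam)
    (hC1 : 0 ≤ C1) (ha : 0 ≤ a) {F : ℝ → E →L[ℝ] E} {P : E →L[ℝ] E}
    (hFP : ∀ s, 0 ≤ s → s ≤ t → ‖F s - P‖ ≤ C1 * exp (-(lam * (t - s))) + a)
    {K : ℕ} {T : ℕ → ℝ} (hT : ∀ k ∈ Finset.Icc 1 K, 0 ≤ T k ∧ T k ≤ T K) (hTt : T K ≤ t)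
    {w : ℕ → E} (hw : ∀ k ∈ Finset.Icc 1 K, ‖w k‖ ≤ M) :
    ‖∑ k ∈ Finset.Icc 1 K, T k ^ mu • (F (T k) - P) (w k)‖
      ≤ K * (M * (C1 * T K ^ mu * exp (-(lam * (t - T K))) + t ^ mu * a)) := by
  have hterm : ∀ k ∈ Finset.Icc 1 K, ‖T k ^ mu • (F (T k) - P) (w k)‖
      ≤ M * (C1 * T K ^ mu * exp (-(lam * (t - T K))) + t ^ mu * a) := by
    intro k hk
    obtain ⟨hTk0, hTkK⟩ := hT k hk
    have hTkt : T k ≤ t := hTkK.trans hTt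
    have hM : 0 ≤ M := (norm_nonneg _).trans (hw k hk)
    rw [norm_smul, norm_of_nonneg (rpow_nonneg hTk0 _)]
    calc T k ^ mu * ‖(F (T k) - P) (w k)‖
        ≤ T k ^ mu * ((C1 * exp (-(lam * (t - T k))) + a) * M) := by
          gcongr
          exact ((F (T k) - P).le_of_opNorm_le (hFP _ hTk0 hTkt) _).trans
            (by gcongr; exact hw k hk)
      _ = M * (C1 * (T k ^ mu * exp (-(lam * (t - T k)))) + T k ^ mu * a) := by ring
      _ ≤ M * (C1 * (T K ^ mu * exp (-(lam * (t - T K)))) + t ^ mu * a) := by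
          gcongr
          exact rpow_nonneg (hTk0.trans hTkK) _
      _ = _ := by ring
  refine (norm_sum_le_of_le _ hterm).trans_eq ?_
  rw [Finset.sum_const, Nat.card_Icc, nsmul_eq_mul, Nat.add_sub_cancel]

lemma norm_drift_sub_le [CompleteSpace E] {mu lam c C1 t a M : ℝ} (hmu : 0 < mu)
    (hlam : 0 ≤ lam) (hC1 : 0 ≤ C1) (ha : 0 ≤ a) {P : E →L[ℝ] E} {F : ℝ → E →L[ℝ] E}
    (hF : AEStronglyMeasurable F)
    (hFP : ∀ s, 0 ≤ s → s ≤ t → ‖F s - P‖ ≤ C1 * exp (-(lam * (t - s))) + a)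
    {K : ℕ} {T : ℕ → ℝ} (hT0 : T 0 = 0) (hT : ∀ k < K, T k ≤ T (k + 1)) (hTt : T K ≤ t)
    {σv : ℕ → E} {σ : ℝ → E}
    (hσ : ∀ k, 1 ≤ k → k ≤ K → ∀ s ∈ Ioo (T (k - 1)) (T k), σ s = σv k)
    (hσtail : ∀ s, T K < s → σ s = σv (K + 1))
    (hσbound : ∀ k, 1 ≤ k → k ≤ K + 1 → ‖σv k‖ ≤ M) :
    ‖(c * mu) • (∫ s in (0:ℝ)..t, s ^ (mu - 1) • F s (σ s))
        + c • ∑ k ∈ Finset.Icc 1 K, T k ^ mu • F (T k) (σv (k + 1) - σv k)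
        - (c * t ^ mu) • P (σv (K + 1))‖
      ≤ |c| * (mu * (M * ∫ s in (0:ℝ)..t, s ^ (mu - 1) * (C1 * exp (-(lam * (t - s))) + a))
        + K * (2 * M * (C1 * T K ^ mu * exp (-(lam * (t - T K))) + t ^ mu * a))) := by
  set A := extendPartition T K t
  have hA : Monotone A := monotone_extendPartition hT hTt
  have hAle : ∀ k ≤ K, A k = T k := fun k hk => extendPartition_of_le hk
  have hA0 : A 0 = 0 := (hAle 0 K.zero_le).trans hT0
  have hAt : A (K + 1) = t := extendPartition_succ
  have hX := norm_smul_integral_rpow_smul_apply_sub_sum_le hmu hF hA hA0.ge (n := K + 1)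
    (g := fun s => C1 * exp (-(lam * (t - s))) + a)
    (by rw [hA0, hAt]
        exact (intervalIntegral.intervalIntegrable_rpow' (by linarith)).mul_continuousOn
          (by fun_prop))
    (fun s hs => by
      rw [hA0, hAt] at hs
      exact hFP s hs.1.le hs.2)
    (eq_of_mem_Ioo_extendPartition hσ hσtail) fun i _ => hσbound (i + 1) (by omega) (by omega)
  rw [hA0, hAt] at hX
  have hTk : ∀ k ∈ Finset.Icc 1 K, 0 ≤ T k ∧ T k ≤ T K := fun k hk => by
    have hkK := (Finset.mem_Icc.mp hk).2
    rw [← hAle k hkK, ← hAle K le_rfl, ← hA0]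
    exact ⟨hA k.zero_le, hA hkK⟩
  have hY := norm_sum_rpow_smul_sub_apply_le hmu.le hlam hC1 ha hFP hTk hTt
    (w := fun k => σv (k + 1) - σv k) (M := 2 * M) fun k hk => by
      obtain ⟨hk1, hkK⟩ := Finset.mem_Icc.mp hk
      have := hσbound (k + 1) (by omega) (by omega)
      have := hσbound k hk1 (by omega)
      exact (norm_sub_le _ _).trans (by linarith)
  have htel : ∑ i ∈ Finset.range (K + 1), (A (i + 1) ^ mu - A i ^ mu) • P (σv (i + 1))
      + ∑ k ∈ Finset.Icc 1 K, T k ^ mu • (P (σv (k + 1)) - P (σv k))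
      = t ^ mu • P (σv (K + 1)) := by
    rw [← hAt, ← sum_range_sub_smul_add_sum_Icc_smul_sub (fun i => A i ^ mu) (fun k => P (σv k))
      (by simp only [hA0, zero_rpow hmu.ne']) K]
    exact congrArg _ (Finset.sum_congr rfl fun k hk => by rw [hAle k (Finset.mem_Icc.mp hk).2])
  have hid : (c * mu) • (∫ s in (0:ℝ)..t, s ^ (mu - 1) • F s (σ s))
        + c • ∑ k ∈ Finset.Icc 1 K, T k ^ mu • F (T k) (σv (k + 1) - σv k)
        - (c * t ^ mu) • P (σv (K + 1))
      = c • ((mu • (∫ s in (0:ℝ)..t, s ^ (mu - 1) • F s (σ s))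
          - ∑ i ∈ Finset.range (K + 1), (A (i + 1) ^ mu - A i ^ mu) • P (σv (i + 1)))
        + ∑ k ∈ Finset.Icc 1 K, T k ^ mu • (F (T k) - P) (σv (k + 1) - σv k)) := by
    rw [mul_smul, mul_smul, ← smul_add, ← smul_sub, ← htel]
    congr 1
    simp only [sub_apply, map_sub, smul_sub, Finset.sum_sub_distrib]
    abel
  rw [hid, norm_smul, norm_eq_abs]
  gcongr
  exact (norm_add_le _ _).trans (add_le_add hX hY)

end Drift

theorem gRDA_drift_asymptotics_general
    (d : ℕ) (mu lam c C1 : ℝ)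
    (hmu0 : 0 < mu) (hmu1 : mu < 1) (hlam : 0 < lam) (hC1 : 0 ≤ C1)
    (P : EuclideanSpace ℝ (Fin d) →L[ℝ] EuclideanSpace ℝ (Fin d))
    (a : ℝ → ℝ) (ha : ∀ t > (0:ℝ), 0 ≤ a t)
    (Φ : ℝ → ℝ → (EuclideanSpace ℝ (Fin d) →L[ℝ] EuclideanSpace ℝ (Fin d)))
    (hΦmeas : ∀ t, StronglyMeasurable fun s => Φ t s)
    (hΦ : ∀ t s : ℝ, 0 ≤ s → s ≤ t →
      ‖Φ t s - P‖ ≤ C1 * Real.exp (-(lam * (t - s))) + a t)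
    (K : ℕ) (T : ℕ → ℝ) (hT0 : T 0 = 0) (hTmono : ∀ k < K, T k < T (k + 1))
    (σv : ℕ → EuclideanSpace ℝ (Fin d)) (σ : ℝ → EuclideanSpace ℝ (Fin d))
    (hσ : ∀ k, 1 ≤ k → k ≤ K → ∀ s ∈ Set.Ioo (T (k - 1)) (T k), σ s = σv k)
    (hσtail : ∀ s : ℝ, T K < s → σ s = σv (K + 1))
    (hσbound : ∀ k, 1 ≤ k → k ≤ K + 1 → ‖σv k‖ ≤ Real.sqrt d)
    (δ : ℝ → EuclideanSpace ℝ (Fin d))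
    (hδ : ∀ t : ℝ, T K < t →
      δ t = (c * mu) • (∫ s in (0:ℝ)..t, s ^ (mu - 1) • (Φ t s) (σ s))
            + c • ∑ k ∈ Finset.Icc 1 K,
                (T k ^ mu) • (Φ t (T k)) (σv (k + 1) - σv k)) :
    ∃ C > 0, ∀ t ≥ max (T K) 1 + 1,
      ‖δ t - (c * t ^ mu) • P (σv (K + 1))‖
        ≤ C * (t ^ (mu - 1) + t ^ mu * a t + Real.exp (-(lam * (t - T K)))) := by
  set M := Real.sqrt d
  set α := |c| * (M * (2 * C1 * (1 + mu) * lam⁻¹))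
  set β := |c| * (M + K * (2 * M))
  set γ := |c| * (K * (2 * M * (C1 * T K ^ mu)))
  refine ⟨|α| + |β| + |γ| + 1, by positivity, fun t ht => ?_⟩
  have htK : T K < t := by linarith [le_max_left (T K) 1]
  have ht0 : 0 < t := by linarith [le_max_right (T K) 1]
  rw [hδ t htK]
  calc _ ≤ |c| * (mu * (M * ∫ s in (0:ℝ)..t, s ^ (mu - 1) * (C1 * exp (-(lam * (t - s))) + a t))
        + K * (2 * M * (C1 * T K ^ mu * exp (-(lam * (t - T K))) + t ^ mu * a t))) :=
        norm_drift_sub_le hmu0 hlam.le hC1 (ha t ht0) (hΦmeas t).aestronglyMeasurable (hΦ t)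
          hT0 (fun k hk => (hTmono k hk).le) htK.le hσ hσtail hσbound
    _ ≤ |c| * (M * (2 * C1 * (1 + mu) * lam⁻¹ * t ^ (mu - 1) + t ^ mu * a t)
        + K * (2 * M * (C1 * T K ^ mu * exp (-(lam * (t - T K))) + t ^ mu * a t))) := by
        rw [mul_left_comm mu M]
        gcongr
        exact mul_integral_rpow_mul_exp_add_le hmu0 hmu1.le hlam hC1 ht0
    _ = α * t ^ (mu - 1) + β * (t ^ mu * a t) + γ * exp (-(lam * (t - T K))) := by ring
    _ ≤ _ := mul_add_mul_add_mul_le α β γ (rpow_nonneg ht0.le _)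
        (mul_nonneg (rpow_nonneg ht0.le _) (ha t ht0)) (exp_pos _).le

/-- **Asymptotics of the gRDA drift vector (deterministic content of eq. (A.4)/(eq:eig_H1)).**
With `Φ(t,s)` close to the idempotent `P` in spectral norm (`‖Φ(t,s) - P‖ ≤ C₁ e^{-λ(t-s)} + a(t)`),
`σ` piecewise constant with jumps at `0 = T₀ < T₁ < ⋯ < T_K`, equal to `σ̄ = σ_{K+1}` after
`T_K` and with `‖σₖ‖₂ ≤ √d`, the drift
`δ(t) = c μ ∫₀^t s^{μ-1} Φ(t,s) σ(s) ds + c ∑_{k=1}^K Φ(t,T_k)(σ_{k+1} - σ_k) T_k^μ`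
satisfies `‖δ(t) - c t^μ P σ̄‖₂ ≤ C (t^{μ-1} + t^μ a(t) + e^{-λ(t - T_K)})` for all
`t ≥ max(T_K, 1) + 1`, for some constant `C > 0`. -/
theorem gRDA_drift_asymptotics
    (d : ℕ) (hd : 1 ≤ d) (mu lam c C1 : ℝ)
    (hmu0 : 0 < mu) (hmu1 : mu < 1) (hlam : 0 < lam) (hC1 : 0 ≤ C1)
    (P : EuclideanSpace ℝ (Fin d) →L[ℝ] EuclideanSpace ℝ (Fin d))
    (hP : P * P = P)
    (a : ℝ → ℝ) (ha : ∀ t > (0:ℝ), 0 ≤ a t)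
    (Φ : ℝ → ℝ → (EuclideanSpace ℝ (Fin d) →L[ℝ] EuclideanSpace ℝ (Fin d)))
    (hΦmeas : ∀ t, StronglyMeasurable fun s => Φ t s)
    (hΦ : ∀ t s : ℝ, 0 ≤ s → s ≤ t →
      ‖Φ t s - P‖ ≤ C1 * Real.exp (-(lam * (t - s))) + a t)
    (K : ℕ) (T : ℕ → ℝ) (hT0 : T 0 = 0) (hTmono : ∀ k < K, T k < T (k + 1))
    (σv : ℕ → EuclideanSpace ℝ (Fin d)) (σ : ℝ → EuclideanSpace ℝ (Fin d))
    (hσ : ∀ k, 1 ≤ k → k ≤ K → ∀ s ∈ Set.Ioo (T (k - 1)) (T k), σ s = σv k)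
    (hσtail : ∀ s : ℝ, T K < s → σ s = σv (K + 1))
    (hσbound : ∀ k, 1 ≤ k → k ≤ K + 1 → ‖σv k‖ ≤ Real.sqrt d)
    (δ : ℝ → EuclideanSpace ℝ (Fin d))
    (hδ : ∀ t : ℝ, T K < t →
      δ t = (c * mu) • (∫ s in (0:ℝ)..t, s ^ (mu - 1) • (Φ t s) (σ s))
            + c • ∑ k ∈ Finset.Icc 1 K,
                (T k ^ mu) • (Φ t (T k)) (σv (k + 1) - σv k)) :
    ∃ C > 0, ∀ t ≥ max (T K) 1 + 1,
      ‖δ t - (c * t ^ mu) • P (σv (K + 1))‖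
        ≤ C * (t ^ (mu - 1) + t ^ mu * a t + Real.exp (-(lam * (t - T K)))) :=
  gRDA_drift_asymptotics_general d mu lam c C1 hmu0 hmu1 hlam hC1 P a ha Φ hΦmeas hΦ K T hT0 hTmono
    σv σ hσ hσtail hσbound δ hδ
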